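/- arXiv:2112.14202 — 4 statements merged into one kernel-verified Lean document; each statement's English description precedes it below -/
import Mathlib

section
/- There exists a unique 2×2 matrix R(λ) with entries in 𝒜[[λ]] such that: (i) Λ(R(λ))·U(λ) − U(λ)·R(λ) = 0 (an identity of matrices with entries in 𝒜[[λ]][λ]); (ii) R(λ) − ((0, r_{n−1}), (0, 1)) ∈ λ·Mat(2, 𝒜[[λ]]); (iii) tr R(λ) = 1; (iv) det R(λ) = 0. (This R(λ) is denoted R_-(λ) and called the basic matrix resolvent at λ = 0.) -/
noncomputable section

open PowerSeries

open scoped Classical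

/-- The polynomial ring `𝒜 = ℚ[q_{n+i}, r_{n+i} : i ∈ ℤ]`; the variable `(true, i)`
is `q_{n+i}` and `(false, i)` is `r_{n+i}`. -/
abbrev A : Type := MvPolynomial (Bool × ℤ) ℚ

/-- The generator `q_{n+i}`. -/
def qv (i : ℤ) : A := MvPolynomial.X (true, i)

/-- The generator `r_{n+i}`. -/
def rv (i : ℤ) : A := MvPolynomial.X (false, i)

/-- The shift operator `Λ`, determined by `Λ(q_{n+i}) = q_{n+i+1}`, `Λ(r_{n+i}) = r_{n+i+1}`. -/
def Lam : A →+* A :=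
  (MvPolynomial.rename (fun bi : Bool × ℤ => (bi.1, bi.2 + 1))).toRingHom

/-- Formal power series over `𝒜` (in `λ`, or in `λ⁻¹`, depending on the context). -/
abbrev S : Type := PowerSeries A

/-- 2×2 matrices over `𝒜[[λ]]` (resp. `𝒜[[λ⁻¹]]`). -/
abbrev M2 : Type := Matrix (Fin 2) (Fin 2) S

/-- `Λ` acting coefficientwise on formal power series. -/
def LamS : S →+* S := PowerSeries.map Lam

/-- The Lax matrix `U(λ) = ((λ, r_n), (λ q_n, 1))`, as a matrix over `𝒜[[λ]]`. -/
def Umat : M2 :=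
  !![PowerSeries.X, PowerSeries.C (R := A) (rv 0);
     PowerSeries.X * PowerSeries.C (R := A) (qv 0), 1]

/-- The Lax matrix multiplied by `λ⁻¹`, i.e. `λ⁻¹·U(λ) = ((1, λ⁻¹ r_n), (q_n, λ⁻¹))`,
as a matrix over `𝒜[[λ⁻¹]]` (here `PowerSeries.X` stands for `λ⁻¹`). -/
def UmatInf : M2 :=
  !![1, PowerSeries.X * PowerSeries.C (R := A) (rv 0);
     PowerSeries.C (R := A) (qv 0), PowerSeries.X]

/-- `R` is the basic matrix resolvent at `λ = 0`: it is a matrix resolvent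
(`Λ(R(λ))·U(λ) = U(λ)·R(λ)`), `R ≡ ((0, r_{n-1}), (0, 1)) mod λ`, `tr R = 1`, `det R = 0`. -/
def IsResMinus (R : M2) : Prop :=
  R.map (⇑LamS) * Umat = Umat * R ∧
  R.map (⇑(PowerSeries.constantCoeff (R := A))) = !![0, rv (-1); 0, 1] ∧
  R 0 0 + R 1 1 = 1 ∧
  R 0 0 * R 1 1 - R 0 1 * R 1 0 = 0

/-- `R` is the basic matrix resolvent at `λ = ∞`: it is a matrix resolvent
(the equation `Λ(R(λ))·U(λ) = U(λ)·R(λ)` is multiplied by `λ⁻¹`, so that it takes place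
in matrices over `𝒜[[λ⁻¹]]`), `R ≡ ((1, 0), (q_{n-1}, 0)) mod λ⁻¹`, `tr R = 1`, `det R = 0`. -/
def IsResPlus (R : M2) : Prop :=
  R.map (⇑LamS) * UmatInf = UmatInf * R ∧
  R.map (⇑(PowerSeries.constantCoeff (R := A))) = !![1, 0; qv (-1), 0] ∧
  R 0 0 + R 1 1 = 1 ∧
  R 0 0 * R 1 1 - R 0 1 * R 1 0 = 0

/-- The `p`-th coefficient matrix of a matrix of power series. -/
def coefM (R : M2) (p : ℕ) : Matrix (Fin 2) (Fin 2) A :=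
  Matrix.of fun i j => PowerSeries.coeff (R := A) p (R i j)

/-- The coefficients `a_{α,p}` (with `α = + ↔ true`, `α = - ↔ false`). -/
def aC (Rm Rp : M2) (α : Bool) (p : ℕ) : A :=
  if α then coefM Rp p 0 0 - (if p = 0 then 1 else 0) else coefM Rm p 0 0

/-- The coefficients `b_{α,p}`. -/
def bC (Rm Rp : M2) (α : Bool) (p : ℕ) : A :=
  if α then coefM Rp p 0 1 else coefM Rm p 0 1

/-- The coefficients `c_{α,p}`. -/
def cC (Rm Rp : M2) (α : Bool) (p : ℕ) : A :=
  if α then coefM Rp p 1 0 else coefM Rm p 1 0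

/-- `U(λ) = U0 + λ·U1`: constant part. -/
def U0 : Matrix (Fin 2) (Fin 2) A := !![0, rv 0; 0, 1]

/-- `U(λ) = U0 + λ·U1`: linear part. -/
def U1 : Matrix (Fin 2) (Fin 2) A := !![1, 0; qv 0, 0]

/-- The coefficient at `λ^m` (`m ∈ ℤ`) of the Laurent-polynomial matrix `V_{α,p}(λ)`,
where `V_{-,p}(λ) = (λ^{-p}R_-(λ))_{≤0} - ((a_{-,p}, b_{-,p}), (0,0))` and
`V_{+,p}(λ) = (λ^{p}R_+(λ))_{≥0} - ((0,0), (c_{+,p}, -a_{+,p}))`. -/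
def Vc (Rm Rp : M2) (α : Bool) (p : ℕ) (m : ℤ) : Matrix (Fin 2) (Fin 2) A :=
  if α then
    (if 0 ≤ m ∧ m ≤ (p : ℤ) then coefM Rp ((p : ℤ) - m).toNat else 0)
      - (if m = 0 then !![0, 0; cC Rm Rp true p, - aC Rm Rp true p] else 0)
  else
    (if -(p : ℤ) ≤ m ∧ m ≤ 0 then coefM Rm (m + (p : ℤ)).toNat else 0)
      - (if m = 0 then !![aC Rm Rp false p, bC Rm Rp false p; 0, 0] else 0)

/-- The coefficient at `λ^m` (`m ∈ ℤ`) of `D(U(λ))`, where `D(λ) = 0`, i.e. of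
`((0, D r_n), (λ·D q_n, 0))`. -/
def DUcoef (D : Derivation ℚ A A) (m : ℤ) : Matrix (Fin 2) (Fin 2) A :=
  if m = 0 then !![0, D (rv 0); 0, 0]
  else if m = 1 then !![0, 0; D (qv 0), 0] else 0

/-- The equation `D(U(λ)) = Λ(V_{α,p}(λ))·U(λ) - U(λ)·V_{α,p}(λ)`, written coefficientwise
in powers of `λ` (both sides are Laurent polynomials in `λ` with matrix coefficients). -/
def DUeq (Rm Rp : M2) (α : Bool) (p : ℕ) (D : Derivation ℚ A A) : Prop :=
  ∀ m : ℤ,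
    DUcoef D m =
      (Vc Rm Rp α p m).map Lam * U0 + (Vc Rm Rp α p (m - 1)).map Lam * U1
        - U0 * Vc Rm Rp α p m - U1 * Vc Rm Rp α p (m - 1)

/-- `D` commutes with the shift `Λ`. -/
def CommutesLam (D : Derivation ℚ A A) : Prop := ∀ f : A, D (Lam f) = Lam (D f)

/-- The action of `D_{α,p}` on the generators `r_n`, `q_n`. -/
def GenEqs (Rm Rp : M2) (α : Bool) (p : ℕ) (D : Derivation ℚ A A) : Prop :=
  if α then
    D (rv 0) = rv 0 * Lam (aC Rm Rp true p) + Lam (bC Rm Rp true p)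
        + (if p = 0 then rv 0 else 0) ∧
    D (qv 0) = qv 0 * Lam (aC Rm Rp true p) - Lam (cC Rm Rp true p)
  else
    D (rv 0) = -(rv 0 * Lam (aC Rm Rp false p)) - Lam (bC Rm Rp false p) ∧
    D (qv 0) = -(qv 0 * Lam (aC Rm Rp false p)) + Lam (cC Rm Rp false p)
        + (if p = 0 then qv 0 else 0)

/-- `D` is the Ablowitz–Ladik derivation `D_{α,p}`: the unique derivation of `𝒜`
commuting with `Λ` and acting on the generators by the prescribed formulas. -/
def IsALDeriv (Rm Rp : M2) (α : Bool) (p : ℕ) (D : Derivation ℚ A A) : Prop :=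
  CommutesLam D ∧ GenEqs Rm Rp α p D

/-- The coefficient at `λ^m` (`m ∈ ℤ`) of `R_α(λ)`: `R_-(λ)` has only nonnegative powers,
`R_+(λ)` only nonpositive ones. -/
def RExt (Rm Rp : M2) (α : Bool) (m : ℤ) : Matrix (Fin 2) (Fin 2) A :=
  if α then (if m ≤ 0 then coefM Rp (-m).toNat else 0)
  else (if 0 ≤ m then coefM Rm m.toNat else 0)

/-- Extension of a double sequence by zero to integer indices. -/
def OmExt (Om : ℕ → ℕ → A) (m k : ℤ) : A :=
  if 0 ≤ m ∧ 0 ≤ k then Om m.toNat k.toNat else 0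

/-- The generating identity `tr(R_+(λ)R_+(μ)) - 1 = (λ-μ)² Σ_{p,q≥0} Ω_{p,q} λ^{-p-1} μ^{-q-1}`,
written coefficientwise: `m, k` are the exponents of `λ⁻¹, μ⁻¹`. -/
def GenPP (Rp : M2) (Om : ℕ → ℕ → A) : Prop :=
  ∀ m k : ℤ,
    (if 0 ≤ m ∧ 0 ≤ k then (coefM Rp m.toNat * coefM Rp k.toNat).trace else 0)
      - (if m = 0 ∧ k = 0 then 1 else 0)
    = OmExt Om (m + 1) (k - 1) - 2 * OmExt Om m k + OmExt Om (m - 1) (k + 1)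

/-- The generating identity `tr(R_-(λ)R_-(μ)) - 1 = (λ-μ)² Σ_{p,q≥0} Ω_{p,q} λ^{p-1} μ^{q-1}`,
written coefficientwise: `m, k` are the exponents of `λ, μ`. -/
def GenMM (Rm : M2) (Om : ℕ → ℕ → A) : Prop :=
  ∀ m k : ℤ,
    (if 0 ≤ m ∧ 0 ≤ k then (coefM Rm m.toNat * coefM Rm k.toNat).trace else 0)
      - (if m = 0 ∧ k = 0 then 1 else 0)
    = OmExt Om (m - 1) (k + 1) - 2 * OmExt Om m k + OmExt Om (m + 1) (k - 1)

/-- The generating identity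
`Σ_{p,q≥0} Ω_{p,q} λ^{-p-1} μ^{q-1} = -tr(R_+(λ)R_-(μ))·Σ_{m≥1} m μ^{m-1} λ^{-m-1} + λ^{-2}`
(the expansion of `-tr(R_+(λ)R_-(μ))/(λ-μ)² + 1/λ²` for `|λ| > |μ|`), together with the
vanishing `Ω_{0,q} = Ω_{p,0} = 0`; `a` is the exponent of `λ⁻¹` and `b` the one of `μ`. -/
def GenPM (Rm Rp : M2) (Om : ℕ → ℕ → A) : Prop :=
  (∀ q, Om 0 q = 0) ∧ (∀ p, Om p 0 = 0) ∧
  ∀ a b : ℤ,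
    OmExt Om (a - 1) (b + 1)
      = -(∑ m ∈ Finset.Icc (1 : ℤ) (min (a - 1) (b + 1)),
            m • (coefM Rp (a - m - 1).toNat * coefM Rm (b - m + 1).toNat).trace)
        + (if a = 2 ∧ b = 0 then 1 else 0)

/-- The generating identity
`Σ_{p,q≥0} Ω_{q,p} λ^{p-1} μ^{-q-1} = -tr(R_-(λ)R_+(μ))·Σ_{m≥1} m λ^{m-1} μ^{-m-1} + μ^{-2}`
(the expansion of `-tr(R_-(λ)R_+(μ))/(λ-μ)² + 1/μ²` for `|μ| > |λ|`);
`c` is the exponent of `λ` and `d` the one of `μ⁻¹`. -/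
def GenMP (Rm Rp : M2) (Om : ℕ → ℕ → A) : Prop :=
  ∀ c d : ℤ,
    OmExt Om (d - 1) (c + 1)
      = -(∑ m ∈ Finset.Icc (1 : ℤ) (min (c + 1) (d - 1)),
            m • (coefM Rm (c - m + 1).toNat * coefM Rp (d - m - 1).toNat).trace)
        + (if c = 0 ∧ d = 2 then 1 else 0)

/-- `Om α β p q` is the full tau-structure family `Ω_{α,p;β,q}`
(with `α = + ↔ true`), as defined by the four generating identities,
where `Ω_{-,p;+,q} := Ω_{+,q;-,p}`. -/
def OmFam (Rm Rp : M2) (Om : Bool → Bool → ℕ → ℕ → A) : Prop :=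
  GenPP Rp (Om true true) ∧ GenMM Rm (Om false false) ∧ GenPM Rm Rp (Om true false) ∧
  ∀ p q, Om false true p q = Om true false q p

/-- The multipoint quantities `Ω_{α_1,p_1;…;α_m,p_m}` (`m = k + 2` points), defined
inductively from the two-point family by applying the derivations `D_{α,p}`. -/
def OmK (Om : Bool → Bool → ℕ → ℕ → A) (D : Bool → ℕ → Derivation ℚ A A) :
    (k : ℕ) → (Fin (k + 2) → Bool) → (Fin (k + 2) → ℕ) → A
  | 0, β, i => Om (β 0) (β 1) (i 0) (i 1)
  | k + 1, β, i =>
      D (β (Fin.last (k + 2))) (i (Fin.last (k + 2)))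
        (OmK Om D k (fun j => β j.castSucc) (fun j => i j.castSucc))

/-- Multiplication of a formal series in `λ_1, …, λ_n` with exponents in `ℤⁿ`
(given by its coefficient function `F`) by a polynomial `P`, coefficientwise. -/
def mulPoly {n : ℕ} (P : MvPolynomial (Fin n) A) (F : (Fin n → ℤ) → A)
    (m : Fin n → ℤ) : A :=
  ∑ d ∈ P.support, P.coeff d * F (fun j => m j - d j)

/-- The Vandermonde-type polynomial `∏_{i<j} (λ_i - λ_j)`. -/
def vandP (n : ℕ) : MvPolynomial (Fin n) A :=
  ∏ p ∈ Finset.univ.filter (fun p : Fin n × Fin n => p.1 < p.2),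
    (MvPolynomial.X p.1 - MvPolynomial.X p.2)

/-- `i` and `j` are cyclically adjacent for `σ`, i.e. `{i,j} = {σ(t), σ(t+1)}` for some `t`. -/
def cycAdj {n : ℕ} [NeZero n] (σ : Equiv.Perm (Fin n)) (i j : Fin n) : Prop :=
  ∃ t : Fin n, (σ t = i ∧ σ (t + 1) = j) ∨ (σ t = j ∧ σ (t + 1) = i)

/-- The polynomial `∏_{i<j} (λ_i - λ_j) / ∏_t (λ_{σ(t)} - λ_{σ(t+1)})`, up to the sign
`permSign σ`: the product of `(λ_i - λ_j)` over ordered non-cyclically-adjacent pairs. -/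
def Qpoly {n : ℕ} [NeZero n] (σ : Equiv.Perm (Fin n)) : MvPolynomial (Fin n) A :=
  ∏ p ∈ Finset.univ.filter
      (fun p : Fin n × Fin n => p.1 < p.2 ∧ ¬ cycAdj σ p.1 p.2),
    (MvPolynomial.X p.1 - MvPolynomial.X p.2)

/-- The sign relating `∏_t (λ_{σ(t)} - λ_{σ(t+1)})` with the corresponding product over
ordered pairs. -/
def permSign {n : ℕ} [NeZero n] (σ : Equiv.Perm (Fin n)) : A :=
  ∏ t : Fin n, (if σ (t + 1) < σ t then (-1 : A) else 1)

/-- The coefficient function of `tr(R_{α_{σ(1)}}(λ_{σ(1)}) ⋯ R_{α_{σ(n)}}(λ_{σ(n)}))`. -/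
def Gfun (Rm Rp : M2) {n : ℕ} (β : Fin n → Bool) (σ : Equiv.Perm (Fin n))
    (m : Fin n → ℤ) : A :=
  (List.ofFn (fun j : Fin n => RExt Rm Rp (β (σ j)) (m (σ j)))).prod.trace

/-- The coefficient function of the generating series
`Σ_{i_1,…,i_m ≥ 0} Ω_{α_1,i_1;…;α_m,i_m} / (λ_1^{α_1 i_1 + 1} ⋯ λ_m^{α_m i_m + 1})`. -/
def lhsF (Om : Bool → Bool → ℕ → ℕ → A) (D : Bool → ℕ → Derivation ℚ A A)
    {k : ℕ} (β : Fin (k + 2) → Bool) (m : Fin (k + 2) → ℤ) : A :=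
  if (∀ j, if β j then m j ≤ -1 else -1 ≤ m j) then
    OmK Om D k β (fun j => if β j then (-(m j) - 1).toNat else (m j + 1).toNat)
  else 0

/-
Existence: `R_-` is the rank-one projection `s • v wᵀ`, where the column `v = (F, 1)` and the
row `w = (-λ H, 1)` satisfy `U v = (1 + λ q_n F) Λv` and `Λw U = (1 - λ r_n Λ H) w`, and
`s = (w v)⁻¹`. Then `Λ(s v w) U` and `U (s v w)` are both multiples of `Λv w`, and pairing the
two eigen-relations (`(Λw U) v = Λw (U v)`) shows that the two factors agree. The scalar
equations for `F` and `H` are solved coefficient by coefficient in `λ`; the one for `F`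
determines `Λ F_{p+1}` from lower coefficients, so it is solved with `Λ⁻¹`.

Uniqueness: for `R = ((a, b), (c, d))`, `tr R = 1` and `det R = 0` give `a = a² + bc`. With the
`(1,0)` and `(0,1)` entries of `Λ(R) U = U R` and `a ≡ c ≡ 0 mod λ`, this shows that two
solutions congruent mod `λⁿ` are congruent mod `λⁿ⁺¹`.
-/

theorem PowerSeries.coeff_mul_eq_sum_fin {R : Type*} [Semiring R] (p : ℕ) (φ ψ : R⟦X⟧) :
    coeff p (φ * ψ) = ∑ i : Fin (p + 1), coeff i φ * coeff (p - i) ψ := by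
  rw [coeff_mul, Finset.Nat.sum_antidiagonal_eq_sum_range_succ_mk,
    Fin.sum_univ_eq_sum_range (fun i => coeff i φ * coeff (p - i) ψ)]

theorem PowerSeries.X_pow_dvd_map_iff {R T : Type*} [Semiring R] [Semiring T] {f : R →+* T}
    (hf : Function.Injective f) {n : ℕ} {φ : R⟦X⟧} : X ^ n ∣ map f φ ↔ X ^ n ∣ φ := by
  simp only [X_pow_dvd_iff, coeff_map, map_eq_zero_iff f hf]

theorem PowerSeries.eq_of_forall_X_pow_dvd_sub {R : Type*} [Ring R] {φ ψ : R⟦X⟧}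
    (h : ∀ n, X ^ n ∣ φ - ψ) : φ = ψ := by
  ext m
  have := X_pow_dvd_iff.1 (h (m + 1)) m (Nat.lt_succ_self m)
  rwa [map_sub, sub_eq_zero] at this

namespace Matrix

theorem map_smul_vecMulVec_mul_eq {R n : Type*} [CommRing R] [Fintype n] (σ : R →+* R)
    (U : Matrix n n R) {v w : n → R} {μ ν s : R} (hv : U *ᵥ v = μ • (σ ∘ v))
    (hw : (σ ∘ w) ᵥ* U = ν • w) (hs : s * (w ⬝ᵥ v) = 1) :
    (s • vecMulVec v w).map σ * U = U * (s • vecMulVec v w) := by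
  have hmap : (s • vecMulVec v w).map σ = σ s • vecMulVec (σ ∘ v) (σ ∘ w) := by
    ext i j
    simp [vecMulVec_apply]
  have hσs : σ s * ((σ ∘ w) ⬝ᵥ (σ ∘ v)) = 1 := by
    simpa [RingHom.map_dotProduct] using congrArg σ hs
  have hscal : ν * (w ⬝ᵥ v) = μ * ((σ ∘ w) ⬝ᵥ (σ ∘ v)) := by
    rw [← smul_eq_mul ν, ← smul_dotProduct, ← hw, ← dotProduct_mulVec, hv, dotProduct_smul,
      smul_eq_mul]
  have hcoef : σ s * ν = s * μ := by
    linear_combination (-(σ s * ν)) * hs + (σ s * s) * hscal + (s * μ) * hσs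
  rw [hmap, Matrix.smul_mul, vecMulVec_mul, hw, Matrix.mul_smul, mul_vecMulVec, hv,
    vecMulVec_smul, smul_vecMulVec, smul_smul, smul_smul, hcoef]

end Matrix

def lamEquiv : A ≃+* A :=
  (MvPolynomial.renameEquiv ℚ ((Equiv.refl Bool).prodCongr (Equiv.addRight (1 : ℤ)))).toRingEquiv

theorem lamEquiv_apply (x : A) : lamEquiv x = Lam x := rfl

theorem Lam_injective : Function.Injective Lam := lamEquiv.injective

theorem Lam_rv (i : ℤ) : Lam (rv i) = rv (i + 1) := by
  simp [Lam, rv]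

def fCoeff : ℕ → A
  | 0 => rv (-1)
  | p + 1 =>
    lamEquiv.symm (fCoeff p - qv 0 * ∑ i : Fin (p + 1), fCoeff i * Lam (fCoeff (p - i)))

def hCoeff : ℕ → A
  | 0 => -qv 0
  | p + 1 => Lam (hCoeff p) + rv 0 * ∑ i : Fin (p + 1), hCoeff i * Lam (hCoeff (p - i))

def fSeries : S := PowerSeries.mk fCoeff

def hSeries : S := PowerSeries.mk hCoeff

theorem coeff_LamS (p : ℕ) (φ : S) : coeff p (LamS φ) = Lam (coeff p φ) :=
  coeff_map Lam p φ

theorem LamS_X : LamS X = X := map_X Lam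

theorem X_pow_dvd_LamS_iff {n : ℕ} {φ : S} : X ^ n ∣ LamS φ ↔ X ^ n ∣ φ :=
  X_pow_dvd_map_iff Lam_injective

theorem Lam_fCoeff_succ (p : ℕ) :
    Lam (fCoeff (p + 1)) =
      fCoeff p - qv 0 * ∑ i : Fin (p + 1), fCoeff i * Lam (fCoeff (p - i)) := by
  rw [fCoeff, ← lamEquiv_apply, RingEquiv.apply_symm_apply]

theorem LamS_fSeries :
    LamS fSeries = C (rv 0) + X * (fSeries - C (qv 0) * fSeries * LamS fSeries) := by
  ext (_ | p) : 1
  · simp [coeff_LamS, fSeries, fCoeff, Lam_rv]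
  · rw [map_add, coeff_succ_X_mul, coeff_C, if_neg p.succ_ne_zero, zero_add, map_sub, mul_assoc,
      coeff_C_mul, coeff_mul_eq_sum_fin]
    simp only [coeff_LamS, fSeries, coeff_mk, Lam_fCoeff_succ]

theorem hSeries_add_C :
    hSeries + C (qv 0) = X * (LamS hSeries + C (rv 0) * hSeries * LamS hSeries) := by
  ext (_ | p) : 1
  · simp [hSeries, hCoeff]
  · rw [map_add, coeff_succ_X_mul, coeff_C, if_neg p.succ_ne_zero, add_zero, map_add, mul_assoc,
      coeff_C_mul, coeff_mul_eq_sum_fin]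
    simp only [coeff_LamS, hSeries, coeff_mk, hCoeff]

section Construction

open Matrix

def resVec : Fin 2 → S := ![fSeries, 1]

def resCovec : Fin 2 → S := ![-(X * hSeries), 1]

theorem mulVec_resVec : Umat *ᵥ resVec = (1 + X * C (qv 0) * fSeries) • (LamS ∘ resVec) := by
  ext i : 1
  fin_cases i <;>
    simp only [mulVec, dotProduct, Fin.sum_univ_two, Umat, resVec, of_apply, cons_val',
      cons_val_zero, cons_val_one, cons_val_fin_one, Fin.zero_eta, Fin.mk_one, Fin.isValue,
      Pi.smul_apply, Function.comp_apply, smul_eq_mul, map_one, mul_one]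
  · linear_combination -LamS_fSeries
  · ring

theorem resCovec_vecMul :
    (LamS ∘ resCovec) ᵥ* Umat = (1 - C (rv 0) * X * LamS hSeries) • resCovec := by
  ext i : 1
  fin_cases i <;>
    simp only [vecMul, dotProduct, Fin.sum_univ_two, Umat, resCovec, of_apply, cons_val',
      cons_val_zero, cons_val_one, cons_val_fin_one, Fin.zero_eta, Fin.mk_one, Fin.isValue,
      Pi.smul_apply, Function.comp_apply, smul_eq_mul, map_neg, map_mul, map_one, LamS_X,
      one_mul, mul_one]
  · linear_combination X * hSeries_add_C
  · ring

theorem resCovec_dotProduct_resVec : resCovec ⬝ᵥ resVec = 1 - X * hSeries * fSeries := by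
  simp only [dotProduct, Fin.sum_univ_two, resCovec, resVec, cons_val_zero, cons_val_one,
    cons_val_fin_one, mul_one]
  ring

def resScale : S := invOfUnit (resCovec ⬝ᵥ resVec) 1

theorem resScale_mul : resScale * (resCovec ⬝ᵥ resVec) = 1 := by
  rw [mul_comm]
  exact mul_invOfUnit _ _ (by rw [resCovec_dotProduct_resVec]; simp)

def resMinus : M2 := resScale • vecMulVec resVec resCovec

theorem resMinus_apply (i j : Fin 2) : resMinus i j = resScale * (resVec i * resCovec j) := rfl

theorem isResMinus_resMinus : IsResMinus resMinus := by
  have hs := resScale_mul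
  rw [resCovec_dotProduct_resVec] at hs
  refine ⟨map_smul_vecMulVec_mul_eq LamS Umat mulVec_resVec resCovec_vecMul resScale_mul,
    ?_, ?_, ?_⟩
  · ext i j : 1
    fin_cases i <;> fin_cases j <;> simp [resMinus, resScale, resVec, resCovec, fSeries, fCoeff]
  · simp only [resMinus_apply, resVec, resCovec, cons_val_zero, cons_val_one, cons_val_fin_one]
    linear_combination hs
  · simp only [resMinus_apply, resVec, resCovec, cons_val_zero, cons_val_one, cons_val_fin_one]
    ring

end Construction

namespace IsResMinus

variable {R : M2}

theorem X_dvd_apply_zero_zero (h : IsResMinus R) : X ∣ R 0 0 := by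
  simpa [X_dvd_iff] using congrFun (congrFun h.2.1 0) 0

theorem X_dvd_apply_one_zero (h : IsResMinus R) : X ∣ R 1 0 := by
  simpa [X_dvd_iff] using congrFun (congrFun h.2.1 1) 0

theorem apply_zero_zero_eq (h : IsResMinus R) : R 0 0 = R 0 0 * R 0 0 + R 0 1 * R 1 0 := by
  linear_combination h.2.2.2 - R 0 0 * h.2.2.1

theorem apply_one_zero_eq (h : IsResMinus R) :
    R 1 0 = X * (LamS (R 1 0) + C (qv 0) * LamS (R 1 1) - C (qv 0) * R 0 0) := by
  have e := congrFun (congrFun h.1 1) 0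
  simp only [Matrix.mul_apply, Fin.sum_univ_two, Matrix.map_apply, Umat, Matrix.of_apply,
    Matrix.cons_val', Matrix.cons_val_zero, Matrix.cons_val_one, Matrix.cons_val_fin_one,
    Fin.isValue] at e
  linear_combination -e

theorem LamS_apply_zero_one (h : IsResMinus R) :
    LamS (R 0 1) = X * R 0 1 + C (rv 0) * R 1 1 - C (rv 0) * LamS (R 0 0) := by
  have e := congrFun (congrFun h.1 0) 1
  simp only [Matrix.mul_apply, Fin.sum_univ_two, Matrix.map_apply, Umat, Matrix.of_apply,
    Matrix.cons_val', Matrix.cons_val_zero, Matrix.cons_val_one, Matrix.cons_val_fin_one,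
    Fin.isValue] at e
  linear_combination e

theorem X_pow_succ_dvd_sub {R₁ R₂ : M2} (h₁ : IsResMinus R₁) (h₂ : IsResMinus R₂) {n : ℕ}
    (hn : ∀ i j, X ^ n ∣ R₁ i j - R₂ i j) (i j : Fin 2) : X ^ (n + 1) ∣ R₁ i j - R₂ i j := by
  have hc : X ^ (n + 1) ∣ R₁ 1 0 - R₂ 1 0 := by
    have e : R₁ 1 0 - R₂ 1 0 = X * (LamS (R₁ 1 0 - R₂ 1 0)
        + C (qv 0) * LamS (R₁ 1 1 - R₂ 1 1) - C (qv 0) * (R₁ 0 0 - R₂ 0 0)) := by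
      simp only [map_sub]
      linear_combination h₁.apply_one_zero_eq - h₂.apply_one_zero_eq
    rw [e, pow_succ']
    exact mul_dvd_mul_left X <| dvd_sub (dvd_add (X_pow_dvd_LamS_iff.2 (hn 1 0))
      (dvd_mul_of_dvd_right (X_pow_dvd_LamS_iff.2 (hn 1 1)) _))
      (dvd_mul_of_dvd_right (hn 0 0) _)
  have ha : X ^ (n + 1) ∣ R₁ 0 0 - R₂ 0 0 := by
    have e : R₁ 0 0 - R₂ 0 0 = (R₁ 0 0 - R₂ 0 0) * (R₁ 0 0 + R₂ 0 0)
        + (R₁ 0 1 - R₂ 0 1) * R₁ 1 0 + R₂ 0 1 * (R₁ 1 0 - R₂ 1 0) := by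
      linear_combination h₁.apply_zero_zero_eq - h₂.apply_zero_zero_eq
    rw [e, pow_succ]
    exact dvd_add (dvd_add (mul_dvd_mul (hn 0 0) (dvd_add h₁.X_dvd_apply_zero_zero
      h₂.X_dvd_apply_zero_zero)) (mul_dvd_mul (hn 0 1) h₁.X_dvd_apply_one_zero))
      (dvd_mul_of_dvd_right (pow_succ (X : S) n ▸ hc) _)
  have hd : X ^ (n + 1) ∣ R₁ 1 1 - R₂ 1 1 := by
    have e : R₁ 1 1 - R₂ 1 1 = -(R₁ 0 0 - R₂ 0 0) := by
      linear_combination h₁.2.2.1 - h₂.2.2.1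
    exact e ▸ (dvd_neg.2 ha)
  have hb : X ^ (n + 1) ∣ R₁ 0 1 - R₂ 0 1 := by
    have e : LamS (R₁ 0 1 - R₂ 0 1) = X * (R₁ 0 1 - R₂ 0 1)
        + C (rv 0) * (R₁ 1 1 - R₂ 1 1) - C (rv 0) * LamS (R₁ 0 0 - R₂ 0 0) := by
      simp only [map_sub]
      linear_combination h₁.LamS_apply_zero_one - h₂.LamS_apply_zero_one
    rw [← X_pow_dvd_LamS_iff, e]
    exact dvd_sub (dvd_add (pow_succ' (X : S) n ▸ mul_dvd_mul_left X (hn 0 1))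
      (dvd_mul_of_dvd_right hd _)) (dvd_mul_of_dvd_right (X_pow_dvd_LamS_iff.2 ha) _)
  fin_cases i <;> fin_cases j
  exacts [ha, hb, hc, hd]

theorem unique {R₁ R₂ : M2} (h₁ : IsResMinus R₁) (h₂ : IsResMinus R₂) : R₁ = R₂ := by
  have h : ∀ n i j, X ^ n ∣ R₁ i j - R₂ i j := by
    intro n
    induction n with
    | zero => simp
    | succ n ih => exact X_pow_succ_dvd_sub h₁ h₂ ih
  ext i j : 1
  exact eq_of_forall_X_pow_dvd_sub fun n => h n i j

end IsResMinus

/-- Existence and uniqueness of the basic matrix resolvent `R_-(λ)` at `λ = 0`. -/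
theorem exists_unique_basic_resolvent_minus : ∃! R : M2, IsResMinus R :=
  ⟨resMinus, isResMinus_resMinus, fun _ h => h.unique isResMinus_resMinus⟩

end
end

section
/- There exists a unique 2×2 matrix R(λ) with entries in 𝒜[[λ^{-1}]] such that: (i) Λ(R(λ))·U(λ) − U(λ)·R(λ) = 0 (an identity of matrices with entries in 𝒜[[λ^{-1}]][λ]); (ii) R(λ) − ((1, 0), (q_{n−1}, 0)) ∈ λ^{-1}·Mat(2, 𝒜[[λ^{-1}]]); (iii) tr R(λ) = 1; (iv) det R(λ) = 0. (This R(λ) is denoted R_+(λ) and called the basic matrix resolvent at λ = ∞.) -/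
noncomputable section

open PowerSeries

open scoped Classical

/-!
The normalisation at `λ⁻¹ = 0` and `tr R = 1` force `R = ((1 + λ⁻¹α, λ⁻¹β), (γ, -λ⁻¹α))`
(`resolventOf ![α, β, γ]`).
For such `R` the off-diagonal entries of `Λ(R)·λ⁻¹U = λ⁻¹U·R` and `det R = 0` are the equations
`β = r_n (1 + λ⁻¹(α + Λα)) + λ⁻¹Λβ`, `Λγ = q_n (1 + λ⁻¹(α + Λα)) + λ⁻¹γ`, `α = -(βγ + λ⁻¹α²)`.
Read as a fixed-point problem, with `β` and `γ` computed before `α`, they raise the `λ⁻¹`-adic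
order of a difference by one, so they have exactly one solution. The diagonal entries come for
free: `R` and `Λ(R)` are idempotent by Cayley–Hamilton, so `E = Λ(R)·U - U·R` satisfies
`E = Λ(R)·E + E·R`; for diagonal `E` this reads `(1 - Λ(R)ᵢᵢ - Rᵢᵢ)·Eᵢᵢ = 0`, and the first factor
has constant coefficient `∓1`.
-/

namespace PowerSeries

variable {R R' ι : Type*} [CommRing R] [CommRing R']

theorem smodEq_X_pow_iff {f g : R⟦X⟧} {n : ℕ} :
    f ≡ g [SMOD Ideal.span {(X : R⟦X⟧) ^ n}] ↔ ∀ m < n, coeff m f = coeff m g := by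
  simp only [SModEq.sub_mem, Ideal.mem_span_singleton, X_pow_dvd_iff, map_sub, sub_eq_zero]

theorem X_mul_smodEq {f g : R⟦X⟧} {n : ℕ} (h : f ≡ g [SMOD Ideal.span {(X : R⟦X⟧) ^ n}]) :
    X * f ≡ X * g [SMOD Ideal.span {(X : R⟦X⟧) ^ (n + 1)}] := by
  rw [smodEq_X_pow_iff] at h ⊢
  rintro (_ | m) hm
  · simp
  · simpa [coeff_succ_X_mul] using h m (by omega)

theorem map_smodEq (φ : R →+* R') {f g : R⟦X⟧} {n : ℕ}
    (h : f ≡ g [SMOD Ideal.span {(X : R⟦X⟧) ^ n}]) :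
    map φ f ≡ map φ g [SMOD Ideal.span {(X : R'⟦X⟧) ^ n}] := by
  rw [smodEq_X_pow_iff] at h ⊢
  intro m hm
  simp [h m hm]

theorem existsUnique_isFixedPt_of_contracting (Φ : (ι → R⟦X⟧) → ι → R⟦X⟧)
    (hΦ : ∀ n f g, (∀ i, f i ≡ g i [SMOD Ideal.span {(X : R⟦X⟧) ^ n}]) →
      ∀ i, Φ f i ≡ Φ g i [SMOD Ideal.span {(X : R⟦X⟧) ^ (n + 1)}]) :
    ∃! f, Function.IsFixedPt Φ f := by
  have iterate_smodEq : ∀ n f g i,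
      (Φ^[n] f) i ≡ (Φ^[n] g) i [SMOD Ideal.span {(X : R⟦X⟧) ^ n}] := by
    intro n
    induction n with
    | zero => simp [SModEq.top]
    | succ n ih =>
      intro f g
      simpa only [Function.iterate_succ_apply'] using hΦ n _ _ (ih f g)
  have eq_of_smodEq : ∀ f g : ι → R⟦X⟧,
      (∀ n i, f i ≡ g i [SMOD Ideal.span {(X : R⟦X⟧) ^ (n + 1)}]) → f = g :=
    fun f g h => funext fun i => ext fun m => smodEq_X_pow_iff.mp (h m i) m m.lt_succ_self
  -- the `m`-th coefficients of the iterates `Φ^[n] 0` are constant for `n > m`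
  set L : ι → R⟦X⟧ := fun i => mk fun m => coeff m ((Φ^[m + 1] 0) i)
  have hL : ∀ n i, L i ≡ (Φ^[n] 0) i [SMOD Ideal.span {(X : R⟦X⟧) ^ n}] := by
    intro n i
    refine smodEq_X_pow_iff.mpr fun m hm => ?_
    obtain ⟨k, rfl⟩ := Nat.exists_eq_add_of_lt hm
    rw [coeff_mk, show m + k + 1 = (m + 1) + k by omega, Function.iterate_add_apply Φ (m + 1) k]
    exact smodEq_X_pow_iff.mp (iterate_smodEq (m + 1) 0 _ i) m m.lt_succ_self
  refine ⟨L, eq_of_smodEq _ _ fun n i => ?_, fun g hg => eq_of_smodEq _ _ fun n i => ?_⟩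
  · have := hΦ n _ _ (hL n) i
    rw [← Function.iterate_succ_apply' Φ n] at this
    exact this.trans (hL (n + 1) i).symm
  · rw [← (hg.iterate (n + 1)).eq]
    exact (iterate_smodEq (n + 1) g 0 i).trans (hL (n + 1) i).symm

end PowerSeries

theorem sub_eq_mul_sub_add_sub_mul_of_isIdempotentElem {M : Type*} [Ring M] {P Q : M}
    (hP : IsIdempotentElem P) (hQ : IsIdempotentElem Q) (U : M) :
    P * U - U * Q = P * (P * U - U * Q) + (P * U - U * Q) * Q := by
  simp only [mul_sub, sub_mul, ← mul_assoc, hP.eq]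
  rw [mul_assoc U, hQ.eq]
  abel

namespace Matrix

variable {K : Type*} [CommRing K]

theorem isIdempotentElem_of_trace_eq_one_of_det_eq_zero {M : Matrix (Fin 2) (Fin 2) K}
    (htr : M.trace = 1) (hdet : M.det = 0) : IsIdempotentElem M := by
  rw [trace_fin_two] at htr
  rw [det_fin_two] at hdet
  ext i j
  fin_cases i <;> fin_cases j <;>
    simp only [Fin.zero_eta, Fin.isValue, Fin.mk_one, mul_apply, Fin.sum_univ_two]
  · linear_combination -hdet + M 0 0 * htr
  · linear_combination M 0 1 * htr
  · linear_combination M 1 0 * htr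
  · linear_combination -hdet + M 1 1 * htr

theorem mul_eq_mul_of_isIdempotentElem_of_offDiag {P Q U : Matrix (Fin 2) (Fin 2) K}
    (hP : IsIdempotentElem P) (hQ : IsIdempotentElem Q)
    (h₀ : IsUnit (1 - P 0 0 - Q 0 0)) (h₁ : IsUnit (1 - P 1 1 - Q 1 1))
    (h₀₁ : (P * U) 0 1 = (U * Q) 0 1) (h₁₀ : (P * U) 1 0 = (U * Q) 1 0) :
    P * U = U * Q := by
  set E := P * U - U * Q with hE
  have hE₀₁ : E 0 1 = 0 := by simp [hE, h₀₁]
  have hE₁₀ : E 1 0 = 0 := by simp [hE, h₁₀]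
  have key := congrFun₂ (sub_eq_mul_sub_add_sub_mul_of_isIdempotentElem hP hQ U)
  rw [← hE] at key
  have hE₀₀ : (1 - P 0 0 - Q 0 0) * E 0 0 = 0 := by
    have := key 0 0
    simp only [add_apply, mul_apply, Fin.sum_univ_two, hE₀₁, hE₁₀] at this
    linear_combination this
  have hE₁₁ : (1 - P 1 1 - Q 1 1) * E 1 1 = 0 := by
    have := key 1 1
    simp only [add_apply, mul_apply, Fin.sum_univ_two, hE₀₁, hE₁₀] at this
    linear_combination this
  rw [← sub_eq_zero]
  ext i j
  fin_cases i <;> fin_cases j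
  exacts [h₀.mul_right_eq_zero.mp hE₀₀, hE₀₁, hE₁₀, h₁.mul_right_eq_zero.mp hE₁₁]

end Matrix

def shiftEquiv : A ≃+* A :=
  (MvPolynomial.renameEquiv ℚ ((Equiv.refl Bool).prodCongr (Equiv.addRight 1))).toRingEquiv

theorem shiftEquiv_apply (f : A) : shiftEquiv f = Lam f := rfl

theorem Lam_qv (i : ℤ) : Lam (qv i) = qv (i + 1) := MvPolynomial.rename_X _ _

theorem shiftEquiv_symm_qv_zero : shiftEquiv.symm (qv 0) = qv (-1) := by
  rw [RingEquiv.symm_apply_eq, shiftEquiv_apply, Lam_qv, neg_add_cancel]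

def LamInvS : S →+* S := PowerSeries.map (shiftEquiv.symm : A →+* A)

theorem LamS_LamInvS (f : S) : LamS (LamInvS f) = f := by
  ext n
  simp [LamS, LamInvS, ← shiftEquiv_apply]

theorem LamInvS_LamS (f : S) : LamInvS (LamS f) = f := by
  ext n
  simp [LamS, LamInvS, ← shiftEquiv_apply]

theorem eq_LamInvS_iff {f g : S} : f = LamInvS g ↔ LamS f = g :=
  ⟨fun h => h ▸ LamS_LamInvS g, fun h => h ▸ (LamInvS_LamS f).symm⟩

theorem constantCoeff_LamS (f : S) : constantCoeff (LamS f) = Lam (constantCoeff f) := by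
  rw [← coeff_zero_eq_constantCoeff_apply, LamS, coeff_map, coeff_zero_eq_constantCoeff_apply]

theorem constantCoeff_LamInvS (f : S) :
    constantCoeff (LamInvS f) = shiftEquiv.symm (constantCoeff f) := by
  rw [← coeff_zero_eq_constantCoeff_apply, LamInvS, coeff_map, coeff_zero_eq_constantCoeff_apply]
  rfl

def resolventOf (t : Fin 3 → S) : M2 := !![1 + X * t 0, X * t 1; t 2, -(X * t 0)]

def resolventStepβ (t : Fin 3 → S) : S :=
  C (rv 0) * (1 + X * (t 0 + LamS (t 0))) + X * LamS (t 1)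

def resolventStepγ (t : Fin 3 → S) : S :=
  LamInvS (C (qv 0) * (1 + X * (t 0 + LamS (t 0))) + X * t 2)

def resolventStep (t : Fin 3 → S) : Fin 3 → S :=
  ![-(resolventStepβ t * resolventStepγ t + X * t 0 ^ 2), resolventStepβ t, resolventStepγ t]

theorem resolventStep_contracting (n : ℕ) (f g : Fin 3 → S)
    (h : ∀ i, f i ≡ g i [SMOD Ideal.span {(X : S) ^ n}]) :
    ∀ i, resolventStep f i ≡ resolventStep g i [SMOD Ideal.span {(X : S) ^ (n + 1)}] := by
  have hdiag : 1 + X * (f 0 + LamS (f 0)) ≡ 1 + X * (g 0 + LamS (g 0))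
      [SMOD Ideal.span {(X : S) ^ (n + 1)}] :=
    SModEq.rfl.add (X_mul_smodEq ((h 0).add (map_smodEq Lam (h 0))))
  have hβ : resolventStepβ f ≡ resolventStepβ g [SMOD Ideal.span {(X : S) ^ (n + 1)}] :=
    (SModEq.rfl.mul hdiag).add (X_mul_smodEq (map_smodEq Lam (h 1)))
  have hγ : resolventStepγ f ≡ resolventStepγ g [SMOD Ideal.span {(X : S) ^ (n + 1)}] :=
    map_smodEq _ ((SModEq.rfl.mul hdiag).add (X_mul_smodEq (h 2)))
  intro i
  fin_cases i
  exacts [((hβ.mul hγ).add (X_mul_smodEq ((h 0).pow 2))).neg, hβ, hγ]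

theorem isFixedPt_resolventStep_iff {t : Fin 3 → S} :
    Function.IsFixedPt resolventStep t ↔
      t 0 = -(t 1 * t 2 + X * t 0 ^ 2) ∧ t 1 = resolventStepβ t ∧ t 2 = resolventStepγ t := by
  simp only [Function.IsFixedPt, funext_iff, Fin.forall_fin_succ]
  simp only [resolventStep, Fin.succ_zero_eq_one, Fin.succ_one_eq_two, Matrix.cons_val_zero,
    Matrix.cons_val_one, Matrix.cons_val_two, IsEmpty.forall_iff, and_true]
  constructor <;> rintro ⟨h0, h1, h2⟩ <;>
    exact ⟨by rw [← h1, ← h2]; exact h0.symm, h1.symm, h2.symm⟩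

theorem resolventOf_zero_one_iff (t : Fin 3 → S) :
    ((resolventOf t).map LamS * UmatInf) 0 1 = (UmatInf * resolventOf t) 0 1 ↔
      t 1 = resolventStepβ t := by
  simp only [resolventOf, resolventStepβ, UmatInf, Matrix.mul_apply, Matrix.map_apply,
    Matrix.of_apply, Matrix.cons_val', Matrix.cons_val_fin_one, Matrix.cons_val_zero,
    Matrix.cons_val_one, Fin.sum_univ_two, map_add, map_one, map_mul, LamS_X, one_mul, mul_neg]
  rw [← X_mul_inj (φ := t 1)]
  constructor <;> intro h <;> linear_combination -h

theorem resolventOf_one_zero_iff (t : Fin 3 → S) :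
    ((resolventOf t).map LamS * UmatInf) 1 0 = (UmatInf * resolventOf t) 1 0 ↔
      t 2 = resolventStepγ t := by
  rw [resolventStepγ, eq_LamInvS_iff]
  simp only [resolventOf, UmatInf, Matrix.mul_apply, Matrix.map_apply, Matrix.of_apply,
    Matrix.cons_val', Matrix.cons_val_fin_one, Matrix.cons_val_one, Matrix.cons_val_zero,
    Fin.sum_univ_two, mul_one, map_neg, map_mul, LamS_X, neg_mul]
  constructor <;> intro h <;> linear_combination h

theorem resolventOf_det_eq_zero_iff (t : Fin 3 → S) :
    (resolventOf t).det = 0 ↔ t 0 = -(t 1 * t 2 + X * t 0 ^ 2) := by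
  have : (resolventOf t).det = X * (-(t 1 * t 2 + X * t 0 ^ 2) - t 0) := by
    simp only [resolventOf, Matrix.det_fin_two, Matrix.of_apply, Matrix.cons_val',
      Matrix.cons_val_zero, Matrix.cons_val_fin_one, Matrix.cons_val_one]
    ring
  rw [this, mul_eq_zero, sub_eq_zero, eq_comm (a := -_)]
  simp [X_ne_zero]

theorem trace_resolventOf (t : Fin 3 → S) : (resolventOf t).trace = 1 := by
  simp [Matrix.trace_fin_two, resolventOf]

theorem constantCoeff_resolventStepγ (t : Fin 3 → S) :
    constantCoeff (resolventStepγ t) = qv (-1) := by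
  simp [resolventStepγ, constantCoeff_LamInvS, shiftEquiv_symm_qv_zero]

theorem isResPlus_resolventOf_iff {t : Fin 3 → S} :
    IsResPlus (resolventOf t) ↔ Function.IsFixedPt resolventStep t := by
  rw [isFixedPt_resolventStep_iff, ← resolventOf_det_eq_zero_iff, ← resolventOf_zero_one_iff,
    ← resolventOf_one_zero_iff]
  constructor
  · rintro ⟨heq, -, -, hdet⟩
    exact ⟨(Matrix.det_fin_two _).trans hdet, by rw [heq], by rw [heq]⟩
  · rintro ⟨hdet, h01, h10⟩
    have hR := Matrix.isIdempotentElem_of_trace_eq_one_of_det_eq_zero (trace_resolventOf t) hdet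
    refine ⟨Matrix.mul_eq_mul_of_isIdempotentElem_of_offDiag (hR.map LamS.mapMatrix) hR
      ?_ ?_ h01 h10, ?_, by simpa [Matrix.trace_fin_two] using trace_resolventOf t,
      (Matrix.det_fin_two _).symm.trans hdet⟩
    · simp [isUnit_iff_constantCoeff, resolventOf, constantCoeff_LamS]
    · simp [isUnit_iff_constantCoeff, resolventOf, constantCoeff_LamS]
    · have hγ := (resolventOf_one_zero_iff t).mp h10
      ext i j
      fin_cases i <;> fin_cases j <;> simp [resolventOf, hγ ▸ constantCoeff_resolventStepγ t]

theorem exists_eq_resolventOf {R : M2} (hR : IsResPlus R) : ∃ t, R = resolventOf t := by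
  obtain ⟨-, hconst, htr, -⟩ := hR
  obtain ⟨α, hα⟩ : X ∣ R 0 0 - 1 := X_dvd_iff.mpr <| by
    rw [map_sub, map_one, sub_eq_zero]
    simpa using congrFun₂ hconst 0 0
  obtain ⟨β, hβ⟩ : X ∣ R 0 1 := X_dvd_iff.mpr (by simpa using congrFun₂ hconst 0 1)
  refine ⟨![α, β, R 1 0], Matrix.ext fun i j => ?_⟩
  fin_cases i <;> fin_cases j <;>
    simp only [Fin.zero_eta, Fin.isValue, Fin.mk_one, hβ, resolventOf, Matrix.of_apply,
      Matrix.cons_val', Matrix.cons_val_zero, Matrix.cons_val_one, Matrix.cons_val,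
      Matrix.cons_val_fin_one]
  · linear_combination hα
  · linear_combination htr - hα

/-- Existence and uniqueness of the basic matrix resolvent `R_+(λ)` at `λ = ∞`. -/
theorem exists_unique_basic_resolvent_plus : ∃! R : M2, IsResPlus R := by
  obtain ⟨t, ht, ht_unique⟩ :=
    existsUnique_isFixedPt_of_contracting resolventStep resolventStep_contracting
  refine ⟨resolventOf t, isResPlus_resolventOf_iff.mpr ht, fun R hR => ?_⟩
  obtain ⟨s, rfl⟩ := exists_eq_resolventOf hR
  rw [ht_unique s (isResPlus_resolventOf_iff.mp hR)]
end
end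

section
/- There exists a unique family of polynomials Ω_{+,p;+,q} ∈ 𝒜 (p, q ≥ 0) such that tr(R_+(λ)·R_+(μ)) − 1 = (λ−μ)² · Σ_{p,q≥0} Ω_{+,p;+,q} λ^{−p−1} μ^{−q−1}, an identity in the ring 𝒜[[λ^{-1}, μ^{-1}}]][λ, μ]. Moreover Ω_{+,p;+,q} = Ω_{+,q;+,p} for all p, q ≥ 0, and Ω_{+,p;+,0} = Ω_{+,0;+,q} = 0 for all p, q ≥ 0. -/
noncomputable section

open PowerSeries

open scoped Classical

/-!
Put `g(m, k) = tr(R_m R_k) - δ_{m,0} δ_{k,0}`, where `R_m` is the coefficient of `λ^{-m}` in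
`R_+(λ)`. Along each antidiagonal `m + k = s`, `GenPP` says that `m ↦ Ω(m, s - m)`, extended by
zero, has second difference `m ↦ g(m, s - m)`. A sequence on `ℤ` vanishing at negative indices is
determined by its second difference: this gives uniqueness, the symmetry (`g` is symmetric), and
`Ω(p, 0) = Ω(0, q) = 0` (read off at `k = -1`, resp. `m = -1`).

For existence, the double sum `φ(m) = Σ_{0 ≤ j < m} (m - j) g(j, s - j)` has the right second
difference, and it vanishes for `m > s` because `Σ_j g(j, s - j) = 0` and `Σ_j j g(j, s - j) = 0`.
The first is the coefficient of `λ^{-s}` in `tr R_+(λ)² = (tr R_+)² - 2 det R_+ = 1`; the second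
follows from it by the symmetry `j ↔ s - j`.
-/

open Finset

section SecondDifference

variable {M : Type*} [AddCommGroup M]

def secondDiff (φ : ℤ → M) (m : ℤ) : M := φ (m + 1) - 2 • φ m + φ (m - 1)

lemma secondDiff_sub (φ ψ : ℤ → M) (m : ℤ) :
    secondDiff (fun a => φ a - ψ a) m = secondDiff φ m - secondDiff ψ m := by
  simp only [secondDiff, smul_sub]
  abel

lemma eq_zero_of_secondDiff_eq_zero (φ : ℤ → M) (h_neg : ∀ m < 0, φ m = 0)
    (h : ∀ m, secondDiff φ m = 0) (m : ℤ) : φ m = 0 := by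
  rcases lt_or_ge m 0 with hm | hm
  · exact h_neg m hm
  lift m to ℕ using hm
  suffices ∀ n : ℕ, φ n = 0 ∧ φ (n - 1) = 0 from (this m).1
  intro n
  induction n with
  | zero =>
    have := h (-1)
    simp_all [secondDiff]
  | succ n ih =>
    have := h n
    push_cast
    simp_all [secondDiff]

def secondPrimitive (g : ℤ → M) (m : ℤ) : M := ∑ j ∈ Ico 0 m, (m - j) • g j

variable (g : ℤ → M)

lemma secondPrimitive_of_nonpos {m : ℤ} (hm : m ≤ 0) : secondPrimitive g m = 0 := by
  simp [secondPrimitive, Ico_eq_empty_of_le hm]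

lemma secondPrimitive_eq_smul_sub (m : ℤ) :
    secondPrimitive g m = m • ∑ j ∈ Ico 0 m, g j - ∑ j ∈ Ico 0 m, j • g j := by
  simp only [secondPrimitive, sub_smul, sum_sub_distrib, smul_sum]

lemma secondPrimitive_add_one (m : ℤ) :
    secondPrimitive g (m + 1) = secondPrimitive g m + ∑ j ∈ Ico 0 (m + 1), g j := by
  rcases lt_or_ge m 0 with hm | hm
  · simp [secondPrimitive_of_nonpos g (show m + 1 ≤ 0 by omega),
      secondPrimitive_of_nonpos g hm.le, Ico_eq_empty_of_le (show m + 1 ≤ 0 by omega)]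
  · simp only [secondPrimitive, ← insert_Ico_right_eq_Ico_add_one hm,
      sum_insert (show m ∉ Ico 0 m by simp), add_sub_cancel_left, one_smul]
    rw [add_left_comm, ← sum_add_distrib]
    congr 1
    exact sum_congr rfl fun j _ => by rw [add_sub_right_comm, add_one_zsmul]

lemma secondDiff_secondPrimitive (hg : ∀ j < 0, g j = 0) (m : ℤ) :
    secondDiff (secondPrimitive g) m = g m := by
  have h₁ := secondPrimitive_add_one g m
  have h₂ := secondPrimitive_add_one g (m - 1)
  rw [sub_add_cancel] at h₂
  rw [secondDiff, h₁, h₂, two_nsmul]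
  rcases lt_or_ge m 0 with hm | hm
  · rw [hg m hm, Ico_eq_empty_of_le (show m + 1 ≤ 0 by omega),
      Ico_eq_empty_of_le (show m ≤ 0 by omega)]
    simp
  · rw [← insert_Ico_right_eq_Ico_add_one hm, sum_insert (by simp)]
    abel

lemma secondPrimitive_eq_zero_of_lt {s m : ℤ} (hsupp : ∀ j, s < j → g j = 0)
    (hsum : ∑ j ∈ Icc 0 s, g j = 0) (hmom : ∑ j ∈ Icc 0 s, j • g j = 0) (hm : s < m) :
    secondPrimitive g m = 0 := by
  have hout (f : ℤ → M) (hf : ∀ j, s < j → f j = 0) : ∑ j ∈ Ico 0 m, f j = ∑ j ∈ Icc 0 s, f j :=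
    (sum_subset (Icc_subset_Ico_right hm) fun j hj hj' => hf j (by simp at hj hj'; omega)).symm
  rw [secondPrimitive_eq_smul_sub, hout _ hsupp, hout _ fun j hj => by rw [hsupp j hj, smul_zero],
    hsum, hmom, smul_zero, sub_zero]

lemma two_nsmul_sum_Icc_zsmul_of_symm {s : ℤ} (hg : ∀ j, g (s - j) = g j) :
    2 • ∑ j ∈ Icc 0 s, j • g j = s • ∑ j ∈ Icc 0 s, g j := by
  have hrefl : ∑ j ∈ Icc 0 s, j • g j = ∑ j ∈ Icc 0 s, (s - j) • g j :=
    sum_nbij' (s - ·) (s - ·) (by simp +contextual) (by simp +contextual)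
      (by simp) (by simp) (fun j _ => by simp [hg])
  rw [two_nsmul]
  nth_rewrite 2 [hrefl]
  rw [← sum_add_distrib, smul_sum]
  exact sum_congr rfl fun j _ => by rw [← add_smul, add_sub_cancel]

end SecondDifference

lemma Matrix.trace_mul_self_fin_two {α : Type*} [CommRing α] (R : Matrix (Fin 2) (Fin 2) α) :
    (R * R).trace = R.trace ^ 2 - 2 * R.det := by
  simp only [Matrix.trace_fin_two, Matrix.det_fin_two, Matrix.mul_apply, Fin.sum_univ_two]
  ring

lemma coefM_mul (R S : M2) (n : ℕ) :
    coefM (R * S) n = ∑ p ∈ antidiagonal n, coefM R p.1 * coefM S p.2 := by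
  ext i j : 1
  simp only [coefM, Matrix.mul_apply, Fin.sum_univ_two, map_add, coeff_mul, Matrix.of_apply,
    Matrix.sum_apply, sum_add_distrib]

lemma trace_coefM (R : M2) (n : ℕ) : (coefM R n).trace = coeff n R.trace := by
  simp [coefM, Matrix.trace]

lemma IsResPlus.trace_mul_self {R : M2} (hR : IsResPlus R) : (R * R).trace = 1 := by
  rw [Matrix.trace_mul_self_fin_two, Matrix.trace_fin_two, Matrix.det_fin_two, hR.2.2.1,
    hR.2.2.2]
  ring

/-- The coefficient of `λ^{-m} μ^{-k}` in `tr(R(λ) R(μ)) - 1`, i.e. the left side of `GenPP`. -/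
def trPairCoeff (R : M2) (m k : ℤ) : A :=
  (if 0 ≤ m ∧ 0 ≤ k then (coefM R m.toNat * coefM R k.toNat).trace else 0)
    - (if m = 0 ∧ k = 0 then 1 else 0)

lemma trPairCoeff_of_neg {R : M2} {m k : ℤ} (h : m < 0 ∨ k < 0) : trPairCoeff R m k = 0 := by
  rw [trPairCoeff, if_neg (by omega), if_neg (by omega), sub_zero]

lemma trPairCoeff_comm (R : M2) (m k : ℤ) : trPairCoeff R m k = trPairCoeff R k m := by
  simp only [trPairCoeff, and_comm, Matrix.trace_mul_comm (coefM R m.toNat)]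

lemma trPairCoeff_natCast (R : M2) (i j : ℕ) :
    trPairCoeff R i j = (coefM R i * coefM R j).trace - if i = 0 ∧ j = 0 then 1 else 0 := by
  simp [trPairCoeff]

lemma IsResPlus.sum_Icc_trPairCoeff {R : M2} (hR : IsResPlus R) (s : ℤ) :
    ∑ j ∈ Icc 0 s, trPairCoeff R j (s - j) = 0 := by
  rcases lt_or_ge s 0 with hs | hs
  · rw [Icc_eq_empty_of_lt hs, sum_empty]
  lift s to ℕ using hs with n
  have hantidiagonal : ∑ j ∈ Icc 0 (n : ℤ), trPairCoeff R j (n - j)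
      = ∑ p ∈ antidiagonal n, trPairCoeff R p.1 p.2 := by
    rw [Nat.sum_antidiagonal_eq_sum_range_succ_mk, Int.Icc_eq_finset_map, sum_map]
    refine sum_congr (by simp) fun i hi => ?_
    simp only [mem_range] at hi
    simp [Nat.cast_sub (Nat.lt_succ_iff.mp hi)]
  rw [hantidiagonal]
  simp only [trPairCoeff_natCast, sum_sub_distrib]
  rw [← Matrix.trace_sum, ← coefM_mul, trace_coefM, hR.trace_mul_self, coeff_one]
  have h00 (x : ℕ × ℕ) : (x.1 = 0 ∧ x.2 = 0) ↔ x = (0, 0) := by rw [Prod.ext_iff]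
  simp only [h00, sum_ite_eq', HasAntidiagonal.mem_antidiagonal, add_zero, @eq_comm ℕ 0, sub_self]

lemma IsResPlus.sum_Icc_smul_trPairCoeff {R : M2} (hR : IsResPlus R) (s : ℤ) :
    ∑ j ∈ Icc 0 s, j • trPairCoeff R j (s - j) = 0 := by
  have h := two_nsmul_sum_Icc_zsmul_of_symm (fun j => trPairCoeff R j (s - j))
    (s := s) fun j => by rw [sub_sub_cancel, trPairCoeff_comm]
  rw [hR.sum_Icc_trPairCoeff, smul_zero, two_nsmul] at h
  exact add_self_eq_zero.mp h

lemma genPP_iff_secondDiff {R : M2} {Om : ℕ → ℕ → A} :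
    GenPP R Om ↔
      ∀ s a : ℤ, trPairCoeff R a (s - a) = secondDiff (fun a => OmExt Om a (s - a)) a := by
  simp only [secondDiff, two_nsmul, ← two_mul]
  refine ⟨fun h s a => ?_, fun h m k => ?_⟩
  · rw [show s - (a + 1) = s - a - 1 by ring, show s - (a - 1) = s - a + 1 by ring]
    exact h a (s - a)
  · have := h (m + k) m
    rw [show m + k - (m + 1) = k - 1 by ring, show m + k - (m - 1) = k + 1 by ring,
      add_sub_cancel_left] at this
    exact this

lemma GenPP.eq {R : M2} {Om₁ Om₂ : ℕ → ℕ → A} (h₁ : GenPP R Om₁) (h₂ : GenPP R Om₂) :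
    Om₁ = Om₂ := by
  rw [genPP_iff_secondDiff] at h₁ h₂
  funext p q
  have hdiff := eq_zero_of_secondDiff_eq_zero
    (fun a => OmExt Om₁ a (p + q - a) - OmExt Om₂ a (p + q - a))
    (fun a ha => by simp [OmExt, ha.not_ge])
    (fun a => by rw [secondDiff_sub, ← h₁, ← h₂, sub_self]) p
  simpa [OmExt, sub_eq_zero] using hdiff

lemma GenPP.swap {R : M2} {Om : ℕ → ℕ → A} (h : GenPP R Om) : GenPP R fun p q => Om q p := by
  intro m k
  have hswap (x y : ℤ) : OmExt (fun p q => Om q p) x y = OmExt Om y x := by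
    simp only [OmExt, and_comm]
  have hkm : trPairCoeff R k m = _ := h k m
  show trPairCoeff R m k = _
  rw [hswap, hswap, hswap, trPairCoeff_comm, hkm]
  ring

lemma GenPP.apply_zero_right {R : M2} {Om : ℕ → ℕ → A} (h : GenPP R Om) (p : ℕ) :
    Om p 0 = 0 := by
  simpa [OmExt] using (h (p + 1) (-1)).symm

lemma GenPP.apply_zero_left {R : M2} {Om : ℕ → ℕ → A} (h : GenPP R Om) (q : ℕ) :
    Om 0 q = 0 := by
  simpa [OmExt] using (h (-1) (q + 1)).symm

def omegaPP (R : M2) (p q : ℕ) : A :=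
  secondPrimitive (fun j => trPairCoeff R j (p + q - j)) p

lemma IsResPlus.omExt_omegaPP {R : M2} (hR : IsResPlus R) (s a : ℤ) :
    OmExt (omegaPP R) a (s - a) = secondPrimitive (fun j => trPairCoeff R j (s - j)) a := by
  by_cases ha : 0 ≤ a ∧ 0 ≤ s - a
  · simp only [OmExt, if_pos ha, omegaPP, Int.toNat_of_nonneg ha.1, Int.toNat_of_nonneg ha.2,
      add_sub_cancel]
  rw [OmExt, if_neg ha]
  rcases not_and_or.mp ha with ha | ha
  · exact (secondPrimitive_of_nonpos _ (by omega)).symm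
  · exact (secondPrimitive_eq_zero_of_lt _ (fun j hj => trPairCoeff_of_neg (by omega))
      (hR.sum_Icc_trPairCoeff s) (hR.sum_Icc_smul_trPairCoeff s) (by omega)).symm

lemma IsResPlus.genPP_omegaPP {R : M2} (hR : IsResPlus R) : GenPP R (omegaPP R) := by
  rw [genPP_iff_secondDiff]
  intro s a
  simp only [hR.omExt_omegaPP]
  exact (secondDiff_secondPrimitive _ (fun j hj => trPairCoeff_of_neg (.inl hj)) a).symm

/-- Existence and uniqueness of the family `Ω_{+,p;+,q}`, together with its symmetry
and the vanishing `Ω_{+,p;+,0} = Ω_{+,0;+,q} = 0`. -/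
theorem exists_unique_Omega_pp (Rp : M2) (hp : IsResPlus Rp) :
    (∃! Om : ℕ → ℕ → A, GenPP Rp Om) ∧
    (∀ Om : ℕ → ℕ → A, GenPP Rp Om →
      (∀ p q, Om p q = Om q p) ∧ (∀ p, Om p 0 = 0) ∧ (∀ q, Om 0 q = 0)) :=
  ⟨⟨omegaPP Rp, hp.genPP_omegaPP, fun _ h => h.eq hp.genPP_omegaPP⟩,
    fun _ h => ⟨fun p q => congrFun (congrFun (h.eq h.swap) p) q, h.apply_zero_right,
      h.apply_zero_left⟩⟩

end
end

section
/- Let Q and s be real numbers and n ≥ 1 an integer. For k ∈ ℤ define ψ_k(s) := (1+Q²)·s^k/k! (this term present only if k ≥ 0) + Q·s^{k+1}/(k+1)! (present only if k ≥ −1) + Q·s^{k−1}/(k−1)! (present only if k ≥ 1); in particular ψ_k(s) = 0 for k ≤ −2. Then the n×n Toeplitz determinant satisfies (1 − Q²) · det( ψ_{m−ℓ}(s) )_{ℓ,m = 0,…,n−1} = Σ_{ℓ=0}^{n} (s^ℓ Q^ℓ / ℓ!) · (1 − Q^{2n+2−2ℓ}). -/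
noncomputable section

namespace ToeplitzAux

open Finset

/-- exponential coefficients -/
def E (s : ℝ) (k : ℕ) : ℝ := s ^ k / (Nat.factorial k : ℝ)

/-- coefficients of `(1+Qζ)e^{sζ}` -/
def fN (Q s : ℝ) : ℕ → ℝ
  | 0 => 1
  | Nat.succ k => E s (k + 1) + Q * E s k

/-- coefficients of `e^{-sζ}/(1+Qζ)` -/
def hN (Q s : ℝ) (K : ℕ) : ℝ :=
  ∑ i ∈ range (K + 1), (-s) ^ i / (Nat.factorial i : ℝ) * (-Q) ^ (K - i)

lemma E_zero (s : ℝ) : E s 0 = 1 := by simp [E]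

lemma fN_zero (Q s : ℝ) : fN Q s 0 = 1 := rfl

lemma hN_zero (Q s : ℝ) : hN Q s 0 = 1 := by simp [hN]

lemma binom (s : ℝ) (r : ℕ) (hr : 1 ≤ r) :
    ∑ j ∈ range (r + 1), E s j * ((-s) ^ (r - j) / (Nat.factorial (r - j) : ℝ)) = 0 := by
  have key : ∀ j ∈ range (r + 1),
      E s j * ((-s) ^ (r - j) / (Nat.factorial (r - j) : ℝ))
        = s ^ j * (-s) ^ (r - j) * (r.choose j : ℝ) / (Nat.factorial r : ℝ) := by
    intro j hj
    have hj' : j ≤ r := by simpa [Nat.lt_succ_iff] using mem_range.mp hj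
    have hfact : ((r.choose j : ℝ)) * (Nat.factorial j : ℝ) * (Nat.factorial (r - j) : ℝ)
        = (Nat.factorial r : ℝ) := by
      exact_mod_cast congrArg (Nat.cast : ℕ → ℝ)
        (Nat.choose_mul_factorial_mul_factorial hj')
    have h1 : (Nat.factorial j : ℝ) ≠ 0 := Nat.cast_ne_zero.mpr (Nat.factorial_ne_zero j)
    have h2 : (Nat.factorial (r - j) : ℝ) ≠ 0 := Nat.cast_ne_zero.mpr (Nat.factorial_ne_zero _)
    have h3 : (Nat.factorial r : ℝ) ≠ 0 := Nat.cast_ne_zero.mpr (Nat.factorial_ne_zero r)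
    rw [E]
    field_simp
    rw [← hfact]
    ring
  rw [Finset.sum_congr rfl key, ← Finset.sum_div, ← add_pow]
  rw [add_neg_cancel, zero_pow (by omega : r ≠ 0), zero_div]

lemma hN_succ (Q s : ℝ) (k : ℕ) :
    hN Q s (k + 1) = -Q * hN Q s k + (-s) ^ (k + 1) / (Nat.factorial (k + 1) : ℝ) := by
  rw [hN, Finset.sum_range_succ, hN, Finset.mul_sum]
  simp only [Nat.sub_self, pow_zero, mul_one]
  congr 1
  apply Finset.sum_congr rfl
  intro i hi
  have hi' : i ≤ k := by simpa [Nat.lt_succ_iff] using mem_range.mp hi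
  have h : k + 1 - i = (k - i) + 1 := by omega
  rw [h, pow_succ]
  ring

lemma P_eq (Q s : ℝ) (K : ℕ) :
    ∑ j ∈ range (K + 1), E s j * hN Q s (K - j) = (-Q) ^ K := by
  induction K with
  | zero => simp [E_zero, hN_zero]
  | succ K ih =>
    rw [Finset.sum_range_succ]
    have h1 : ∀ j ∈ range (K + 1), E s j * hN Q s (K + 1 - j)
        = -Q * (E s j * hN Q s (K - j))
          + E s j * ((-s) ^ (K + 1 - j) / (Nat.factorial (K + 1 - j) : ℝ)) := by
      intro j hj
      have hj' : j ≤ K := by simpa [Nat.lt_succ_iff] using mem_range.mp hj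
      have h : K + 1 - j = (K - j) + 1 := by omega
      rw [h, hN_succ]
      have h' : K - j + 1 = K + 1 - j := by omega
      rw [h']
      ring
    rw [Finset.sum_congr rfl h1, Finset.sum_add_distrib, ← Finset.mul_sum, ih]
    have hb := binom s (K + 1) (by omega)
    rw [Finset.sum_range_succ] at hb
    simp only [Nat.sub_self, pow_zero, Nat.factorial_zero, Nat.cast_one, div_one,
      mul_one] at hb ⊢
    rw [hN_zero, mul_one]
    have hp : (-Q : ℝ) ^ (K + 1) = -(Q * (-Q) ^ K) := by rw [pow_succ]; ring
    rw [hp]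
    linarith [hb]

lemma conv_eq_zero (Q s : ℝ) (K : ℕ) (hK : 1 ≤ K) :
    ∑ j ∈ range (K + 1), fN Q s j * hN Q s (K - j) = 0 := by
  obtain ⟨K, rfl⟩ : ∃ K', K = K' + 1 := ⟨K - 1, by omega⟩
  rw [Finset.sum_range_succ']
  have hP1 := P_eq Q s (K + 1)
  rw [Finset.sum_range_succ'] at hP1
  have hP0 := P_eq Q s K
  have hsplit : ∀ j ∈ range (K + 1),
      fN Q s (j + 1) * hN Q s (K + 1 - (j + 1))
        = E s (j + 1) * hN Q s (K + 1 - (j + 1)) + Q * (E s j * hN Q s (K - j)) := by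
    intro j hj
    have h : K + 1 - (j + 1) = K - j := by omega
    rw [h, fN]
    ring
  rw [Finset.sum_congr rfl hsplit, Finset.sum_add_distrib, ← Finset.mul_sum, hP0]
  simp only [Nat.succ_sub_succ, Nat.sub_zero, E_zero, one_mul, fN_zero] at hP1 ⊢
  have hp : (-Q : ℝ) ^ (K + 1) = -(Q * (-Q) ^ K) := by rw [pow_succ]; ring
  rw [hp] at hP1
  linarith [hP1]

lemma tele (Q : ℝ) (u : ℕ → ℝ) (a b : ℕ) (hab : a ≤ b) :
    ∑ j ∈ Finset.Ico a b, (u j + Q * u (j + 1)) * (-Q) ^ (j - a)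
      = u a - (-Q) ^ (b - a) * u b := by
  induction b, hab using Nat.le_induction with
  | base => simp
  | succ b hb ih =>
    rw [Finset.sum_Ico_succ_top hb, ih]
    have h1 : b + 1 - a = (b - a) + 1 := by omega
    rw [h1, pow_succ]
    ring

lemma final (Q s : ℝ) (n : ℕ) :
    (1 - Q ^ 2) * ∑ k ∈ range (n + 1), (-Q) ^ k * hN Q s k
      = ∑ ℓ ∈ range (n + 1),
          s ^ ℓ * Q ^ ℓ / (Nat.factorial ℓ : ℝ) * (1 - Q ^ (2 * n + 2 - 2 * ℓ)) := by
  induction n with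
  | zero => simp [hN_zero]
  | succ n ih =>
    rw [Finset.sum_range_succ, mul_add, ih]
    have hexp : (1 - Q ^ 2) * ((-Q) ^ (n + 1) * hN Q s (n + 1))
        = ∑ i ∈ range (n + 2), s ^ i * Q ^ i / (Nat.factorial i : ℝ)
            * (Q ^ (2 * n + 2 - 2 * i) - Q ^ (2 * n + 4 - 2 * i)) := by
      rw [hN, Finset.mul_sum, Finset.mul_sum]
      apply Finset.sum_congr rfl
      intro i hi
      have hi' : i ≤ n + 1 := by simpa [Nat.lt_succ_iff] using mem_range.mp hi
      have e1 : (-Q : ℝ) ^ (n + 1) * (-Q) ^ (n + 1 - i) = (-Q) ^ (2 * n + 2 - i) := by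
        rw [← pow_add]; congr 1; omega
      have e2 : (-Q : ℝ) ^ (2 * n + 2 - i) = (-1 : ℝ) ^ (2 * n + 2 - i) * Q ^ (2 * n + 2 - i) := by
        rw [neg_pow]
      have e3 : (-s : ℝ) ^ i = (-1 : ℝ) ^ i * s ^ i := by rw [neg_pow]
      have e4 : (-1 : ℝ) ^ i * (-1 : ℝ) ^ (2 * n + 2 - i) = 1 := by
        rw [← pow_add]
        have : i + (2 * n + 2 - i) = 2 * (n + 1) := by omega
        rw [this, pow_mul]
        norm_num
      have e5 : (Q : ℝ) ^ (2 * n + 2 - i) = Q ^ i * Q ^ (2 * n + 2 - 2 * i) := by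
        rw [← pow_add]; congr 1; omega
      have e6 : (Q : ℝ) ^ (2 * n + 4 - 2 * i) = Q ^ (2 * n + 2 - 2 * i) * Q ^ 2 := by
        rw [← pow_add]; congr 1; omega
      calc (1 - Q ^ 2) * ((-Q) ^ (n + 1) * ((-s) ^ i / (Nat.factorial i : ℝ) * (-Q) ^ (n + 1 - i)))
          = (1 - Q ^ 2) * ((-s) ^ i / (Nat.factorial i : ℝ)
              * ((-Q) ^ (n + 1) * (-Q) ^ (n + 1 - i))) := by ring
        _ = (1 - Q ^ 2) * ((-1 : ℝ) ^ i * s ^ i / (Nat.factorial i : ℝ)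
              * ((-1 : ℝ) ^ (2 * n + 2 - i) * Q ^ (2 * n + 2 - i))) := by rw [e1, e2, e3]
        _ = ((-1 : ℝ) ^ i * (-1 : ℝ) ^ (2 * n + 2 - i))
              * ((1 - Q ^ 2) * (s ^ i / (Nat.factorial i : ℝ) * Q ^ (2 * n + 2 - i))) := by ring
        _ = (1 - Q ^ 2) * (s ^ i / (Nat.factorial i : ℝ) * (Q ^ i * Q ^ (2 * n + 2 - 2 * i))) := by
              rw [e4, e5]; ring
        _ = s ^ i * Q ^ i / (Nat.factorial i : ℝ)
              * (Q ^ (2 * n + 2 - 2 * i) - Q ^ (2 * n + 4 - 2 * i)) := by rw [e6]; ring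
    rw [hexp, Finset.sum_range_succ (n := n + 1), Finset.sum_range_succ (n := n + 1)]
    have hmain : ∀ ℓ ∈ range (n + 1),
        s ^ ℓ * Q ^ ℓ / (Nat.factorial ℓ : ℝ) * (1 - Q ^ (2 * n + 2 - 2 * ℓ))
          + s ^ ℓ * Q ^ ℓ / (Nat.factorial ℓ : ℝ)
              * (Q ^ (2 * n + 2 - 2 * ℓ) - Q ^ (2 * n + 4 - 2 * ℓ))
        = s ^ ℓ * Q ^ ℓ / (Nat.factorial ℓ : ℝ) * (1 - Q ^ (2 * (n + 1) + 2 - 2 * ℓ)) := by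
      intro ℓ hℓ
      have h : 2 * (n + 1) + 2 - 2 * ℓ = 2 * n + 4 - 2 * ℓ := by omega
      rw [h]; ring
    rw [← add_assoc, ← Finset.sum_add_distrib, Finset.sum_congr rfl hmain]
    congr 1
    have h1 : 2 * n + 2 - 2 * (n + 1) = 0 := by omega
    have h2 : 2 * n + 4 - 2 * (n + 1) = 2 := by omega
    have h3 : 2 * (n + 1) + 2 - 2 * (n + 1) = 2 := by omega
    rw [h1, h2, h3, pow_zero]

end ToeplitzAux

/-- The Toeplitz determinant identity for the weight
`ψ(ζ) = (1 + Qζ)(1 + Qζ⁻¹) e^{sζ}`: with `ψ_k` the Laurent coefficients of `ψ`,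
`(1 - Q²) · det(ψ_{m-ℓ})_{ℓ,m=0}^{n-1} = Σ_{ℓ=0}^{n} (sℓ Qℓ / ℓ!) (1 - Q^{2n+2-2ℓ})`. -/
theorem toeplitz_det_formula (Q s : ℝ) (n : ℕ) (hn : 1 ≤ n)
    (ψ : ℤ → ℝ)
    (hψ : ∀ k : ℤ, ψ k =
      (if 0 ≤ k then (1 + Q ^ 2) * s ^ k.toNat / (Nat.factorial k.toNat : ℝ) else 0)
      + (if -1 ≤ k then Q * s ^ (k + 1).toNat / (Nat.factorial (k + 1).toNat : ℝ) else 0)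
      + (if 1 ≤ k then Q * s ^ (k - 1).toNat / (Nat.factorial (k - 1).toNat : ℝ) else 0)) :
    (1 - Q ^ 2) *
        Matrix.det (Matrix.of fun ℓ m : Fin n => ψ ((m : ℤ) - (ℓ : ℤ)))
      = ∑ ℓ ∈ Finset.range (n + 1),
          s ^ ℓ * Q ^ ℓ / (Nat.factorial ℓ : ℝ) * (1 - Q ^ (2 * n + 2 - 2 * ℓ)) := by
  classical
  -- Step 1: rewrite ψ in the factored form ψ_k = f_k + Q f_{k+1}
  have hψ' : ∀ k : ℤ, ψ k
      = (if 0 ≤ k then ToeplitzAux.fN Q s k.toNat else 0)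
        + Q * (if 0 ≤ k + 1 then ToeplitzAux.fN Q s (k + 1).toNat else 0) := by
    intro k
    rw [hψ]
    rcases le_or_gt 0 k with hk | hk
    · obtain ⟨t, rfl⟩ : ∃ t : ℕ, k = (t : ℤ) := ⟨k.toNat, (Int.toNat_of_nonneg hk).symm⟩
      have e1 : ((t : ℤ) + 1).toNat = t + 1 := by omega
      have e0 : ((t : ℤ)).toNat = t := by omega
      rw [if_pos (by omega : (0:ℤ) ≤ (t:ℤ)), if_pos (by omega : (-1:ℤ) ≤ (t:ℤ)),
        if_pos (by omega : (0:ℤ) ≤ (t:ℤ)), if_pos (by omega : (0:ℤ) ≤ (t:ℤ) + 1),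
        e0, e1]
      cases t with
      | zero =>
        rw [if_neg (by omega : ¬ (1:ℤ) ≤ ((0:ℕ):ℤ))]
        simp [ToeplitzAux.fN, ToeplitzAux.E]
        ring
      | succ t =>
        rw [if_pos (by omega : (1:ℤ) ≤ ((t+1:ℕ):ℤ))]
        have e2 : (((t+1:ℕ):ℤ) - 1).toNat = t := by omega
        rw [e2]
        simp [ToeplitzAux.fN, ToeplitzAux.E]
        ring
    · rw [if_neg (by omega : ¬ (0:ℤ) ≤ k), if_neg (by omega : ¬ (1:ℤ) ≤ k)]
      rcases eq_or_lt_of_le (by omega : k ≤ -1) with hk1 | hk1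
      · subst hk1
        norm_num [ToeplitzAux.fN]
      · rw [if_neg (by omega : ¬ (-1:ℤ) ≤ k), if_neg (by omega : ¬ (0:ℤ) ≤ k + 1),
          if_neg (by omega : ¬ (0:ℤ) ≤ k)]
        simp
  -- The matrices of the factorization
  set A : Matrix (Fin n) (Fin n) ℝ :=
    Matrix.of (fun ℓ m : Fin n => ψ ((m : ℤ) - (ℓ : ℤ))) with hAdef
  set F : Matrix (Fin n) (Fin n) ℝ :=
    Matrix.of (fun ℓ j : Fin n =>
      if (ℓ : ℕ) ≤ (j : ℕ) then ToeplitzAux.fN Q s ((j : ℕ) - (ℓ : ℕ)) else 0) with hFdef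
  set G : Matrix (Fin n) (Fin n) ℝ :=
    Matrix.of (fun j m : Fin n =>
      if (m : ℕ) ≤ (j : ℕ) then (-Q) ^ ((j : ℕ) - (m : ℕ)) else 0) with hGdef
  set x : Fin n → ℝ := fun j => -(ToeplitzAux.hN Q s (n - (j : ℕ))) with hxdef
  set w : Fin n → ℝ := fun m => Q * (-Q) ^ (n - 1 - (m : ℕ)) with hwdef
  set N : Matrix (Fin n) (Fin n) ℝ :=
    1 + Matrix.replicateCol Unit x * Matrix.replicateRow Unit w with hNdef
  -- the key convolution identity
  have key : ∀ ℓ : Fin n, ∑ j : Fin n, F ℓ j * x j = ToeplitzAux.fN Q s (n - (ℓ : ℕ)) := by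
    intro ℓ
    have h1 : ∑ j : Fin n, F ℓ j * x j
        = ∑ j ∈ Finset.range n,
            (if (ℓ : ℕ) ≤ j then ToeplitzAux.fN Q s (j - (ℓ : ℕ)) else 0)
              * -(ToeplitzAux.hN Q s (n - j)) :=
      Fin.sum_univ_eq_sum_range
        (fun j => (if (ℓ : ℕ) ≤ j then ToeplitzAux.fN Q s (j - (ℓ : ℕ)) else 0)
          * -(ToeplitzAux.hN Q s (n - j))) n
    rw [h1, Finset.range_eq_Ico,
      ← Finset.sum_Ico_consecutive _ (Nat.zero_le (ℓ : ℕ)) (le_of_lt ℓ.isLt)]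
    rw [Finset.sum_eq_zero (fun j hj => by
      rw [if_neg (by
        have := (Finset.mem_Ico.mp hj).2; omega), zero_mul]), zero_add]
    have h3 : ∀ j ∈ Finset.Ico (ℓ : ℕ) n,
        (if (ℓ : ℕ) ≤ j then ToeplitzAux.fN Q s (j - (ℓ : ℕ)) else 0)
            * -(ToeplitzAux.hN Q s (n - j))
          = -(ToeplitzAux.fN Q s (j - (ℓ : ℕ)) * ToeplitzAux.hN Q s (n - j)) := by
      intro j hj
      rw [if_pos (Finset.mem_Ico.mp hj).1]
      ring
    rw [Finset.sum_congr rfl h3, Finset.sum_Ico_eq_sum_range]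
    have h4 : ∀ i ∈ Finset.range (n - (ℓ : ℕ)),
        -(ToeplitzAux.fN Q s ((ℓ : ℕ) + i - (ℓ : ℕ)) * ToeplitzAux.hN Q s (n - ((ℓ : ℕ) + i)))
          = -(ToeplitzAux.fN Q s i * ToeplitzAux.hN Q s ((n - (ℓ : ℕ)) - i)) := by
      intro i hi
      have hi' : i < n - (ℓ : ℕ) := Finset.mem_range.mp hi
      have g1 : (ℓ : ℕ) + i - (ℓ : ℕ) = i := by omega
      have g2 : n - ((ℓ : ℕ) + i) = (n - (ℓ : ℕ)) - i := by omega
      rw [g1, g2]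
    rw [Finset.sum_congr rfl h4]
    have hK : 1 ≤ n - (ℓ : ℕ) := by have := ℓ.isLt; omega
    have hc := ToeplitzAux.conv_eq_zero Q s (n - (ℓ : ℕ)) hK
    rw [Finset.sum_range_succ, Nat.sub_self, ToeplitzAux.hN_zero, mul_one] at hc
    have : ∑ i ∈ Finset.range (n - (ℓ : ℕ)),
        -(ToeplitzAux.fN Q s i * ToeplitzAux.hN Q s ((n - (ℓ : ℕ)) - i))
      = -∑ i ∈ Finset.range (n - (ℓ : ℕ)),
          (ToeplitzAux.fN Q s i * ToeplitzAux.hN Q s ((n - (ℓ : ℕ)) - i)) := by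
      rw [← Finset.sum_neg_distrib]
    rw [this]
    linarith [hc]
  -- the entrywise identity A * G = F * N
  have hAG : ∀ ℓ m : Fin n, ∑ j : Fin n, A ℓ j * G j m
      = F ℓ m + ToeplitzAux.fN Q s (n - (ℓ : ℕ)) * w m := by
    intro ℓ m
    have h1 : ∑ j : Fin n, A ℓ j * G j m
        = ∑ j ∈ Finset.range n,
            ψ ((j : ℤ) - ((ℓ : ℕ) : ℤ))
              * (if (m : ℕ) ≤ j then (-Q) ^ (j - (m : ℕ)) else 0) :=
      Fin.sum_univ_eq_sum_range
        (fun j => ψ ((j : ℤ) - ((ℓ : ℕ) : ℤ))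
          * (if (m : ℕ) ≤ j then (-Q) ^ (j - (m : ℕ)) else 0)) n
    rw [h1, Finset.range_eq_Ico,
      ← Finset.sum_Ico_consecutive _ (Nat.zero_le (m : ℕ)) (le_of_lt m.isLt)]
    rw [Finset.sum_eq_zero (fun j hj => by
      rw [if_neg (by have := (Finset.mem_Ico.mp hj).2; omega), mul_zero]), zero_add]
    set u : ℕ → ℝ := fun j =>
      if (0:ℤ) ≤ (j : ℤ) - ((ℓ : ℕ) : ℤ)
      then ToeplitzAux.fN Q s ((j : ℤ) - ((ℓ : ℕ) : ℤ)).toNat else 0 with hudef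
    have h3 : ∀ j ∈ Finset.Ico (m : ℕ) n,
        ψ ((j : ℤ) - ((ℓ : ℕ) : ℤ))
            * (if (m : ℕ) ≤ j then (-Q) ^ (j - (m : ℕ)) else 0)
          = (u j + Q * u (j + 1)) * (-Q) ^ (j - (m : ℕ)) := by
      intro j hj
      rw [if_pos (Finset.mem_Ico.mp hj).1, hψ' ((j : ℤ) - ((ℓ : ℕ) : ℤ))]
      have e : ((j : ℤ) - ((ℓ : ℕ) : ℤ)) + 1 = ((j + 1 : ℕ) : ℤ) - ((ℓ : ℕ) : ℤ) := by
        push_cast; ring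
      rw [e]
    rw [Finset.sum_congr rfl h3,
      ToeplitzAux.tele Q u (m : ℕ) n (le_of_lt m.isLt)]
    have uval : ∀ b : ℕ, u b
        = if (ℓ : ℕ) ≤ b then ToeplitzAux.fN Q s (b - (ℓ : ℕ)) else 0 := by
      intro b
      show (if (0:ℤ) ≤ (b : ℤ) - ((ℓ : ℕ) : ℤ)
          then ToeplitzAux.fN Q s ((b : ℤ) - ((ℓ : ℕ) : ℤ)).toNat else 0)
        = if (ℓ : ℕ) ≤ b then ToeplitzAux.fN Q s (b - (ℓ : ℕ)) else 0
      by_cases hab : (ℓ : ℕ) ≤ b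
      · rw [if_pos (by omega : (0:ℤ) ≤ (b : ℤ) - ((ℓ : ℕ) : ℤ)), if_pos hab]
        congr 1
        omega
      · rw [if_neg (by omega : ¬ (0:ℤ) ≤ (b : ℤ) - ((ℓ : ℕ) : ℤ)), if_neg hab]
    have hum : u (m : ℕ) = F ℓ m := (uval (m : ℕ)).trans rfl
    have hun : u n = ToeplitzAux.fN Q s (n - (ℓ : ℕ)) := by
      rw [uval n, if_pos (le_of_lt ℓ.isLt)]
    rw [hum, hun]
    have hm : (m : ℕ) < n := m.isLt
    have e5 : n - (m : ℕ) = (n - 1 - (m : ℕ)) + 1 := by omega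
    rw [e5, pow_succ, hwdef]
    ring
  -- assemble the matrix identity
  have hMat : A * G = F * N := by
    ext ℓ m
    rw [Matrix.mul_apply, Matrix.mul_apply, hAG ℓ m]
    have hterm : ∀ j : Fin n,
        F ℓ j * N j m
          = (if j = m then F ℓ j else 0) + (F ℓ j * x j) * w m := by
      intro j
      rw [hNdef, Matrix.add_apply, Matrix.one_apply, Matrix.mul_apply]
      rw [Finset.univ_unique, Finset.sum_singleton]
      rw [Matrix.replicateCol_apply, Matrix.replicateRow_apply]
      rw [mul_add, mul_ite, mul_one, mul_zero]
      ring
    rw [Finset.sum_congr rfl (fun j _ => hterm j), Finset.sum_add_distrib,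
      Finset.sum_ite_eq' Finset.univ m (fun j => F ℓ j), ← Finset.sum_mul, key ℓ]
    simp
  -- determinants
  have hdetG : G.det = 1 := by
    have ht : G.BlockTriangular OrderDual.toDual := by
      intro i j hij
      have hij' : (i : ℕ) < (j : ℕ) := hij
      show (if (j : ℕ) ≤ (i : ℕ) then (-Q) ^ ((i : ℕ) - (j : ℕ)) else 0) = 0
      rw [if_neg (by omega)]
    rw [Matrix.det_of_lowerTriangular G ht]
    apply Finset.prod_eq_one
    intro i _
    show (if (i : ℕ) ≤ (i : ℕ) then (-Q) ^ ((i : ℕ) - (i : ℕ)) else 0) = 1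
    simp
  have hdetF : F.det = 1 := by
    have ht : F.BlockTriangular id := by
      intro i j hij
      have hij' : (j : ℕ) < (i : ℕ) := hij
      show (if (i : ℕ) ≤ (j : ℕ) then ToeplitzAux.fN Q s ((j : ℕ) - (i : ℕ)) else 0) = 0
      rw [if_neg (by omega)]
    rw [Matrix.det_of_upperTriangular ht]
    apply Finset.prod_eq_one
    intro i _
    show (if (i : ℕ) ≤ (i : ℕ) then ToeplitzAux.fN Q s ((i : ℕ) - (i : ℕ)) else 0) = 1
    simp [ToeplitzAux.fN_zero]
  have hdetN : N.det = 1 + dotProduct w x := by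
    rw [hNdef]
    exact Matrix.det_one_add_replicateCol_mul_replicateRow x w
  have hdet : A.det = 1 + dotProduct w x := by
    have h := congrArg Matrix.det hMat
    rw [Matrix.det_mul, Matrix.det_mul, hdetG, hdetF, mul_one, one_mul, hdetN] at h
    exact h
  rw [hdet]
  -- final summation
  have hsum : (1 : ℝ) + dotProduct w x
      = ∑ k ∈ Finset.range (n + 1), (-Q) ^ k * ToeplitzAux.hN Q s k := by
    have h1 : dotProduct w x
        = ∑ j ∈ Finset.range n,
            (Q * (-Q) ^ (n - 1 - j)) * -(ToeplitzAux.hN Q s (n - j)) :=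
      Fin.sum_univ_eq_sum_range
        (fun j => (Q * (-Q) ^ (n - 1 - j)) * -(ToeplitzAux.hN Q s (n - j))) n
    rw [h1, Finset.sum_range_succ' (fun k => (-Q) ^ k * ToeplitzAux.hN Q s k) n]
    rw [ToeplitzAux.hN_zero, pow_zero, one_mul]
    have h2 : ∑ j ∈ Finset.range n,
        (Q * (-Q) ^ (n - 1 - j)) * -(ToeplitzAux.hN Q s (n - j))
          = ∑ k ∈ Finset.range n, (-Q) ^ (k + 1) * ToeplitzAux.hN Q s (k + 1) := by
      rw [← Finset.sum_range_reflect
        (fun j => (Q * (-Q) ^ (n - 1 - j)) * -(ToeplitzAux.hN Q s (n - j))) n]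
      apply Finset.sum_congr rfl
      intro j hj
      have hj' : j < n := Finset.mem_range.mp hj
      have g1 : n - 1 - (n - 1 - j) = j := by omega
      have g2 : n - (n - 1 - j) = j + 1 := by omega
      rw [g1, g2, pow_succ]
      ring
    rw [h2]
    ring
  rw [hsum]
  exact ToeplitzAux.final Q s n

end
end
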